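/- arXiv:2511.11843 — 3 statements merged into one kernel-verified Lean document; each statement's English description precedes it below -/
import Mathlib

section
/- Let P ≥ 2 be an integer and let w_1, …, w_m be nonnegative real weights with total W = Σ_{i=1}^m w_i > 0 such that w_i ≤ W/(P·ln P) for every i. Suppose each ball i is placed into one of P bins independently and uniformly at random. Then there is an absolute constant c₂ ≥ 1 (independent of m, P and the weights) such that with probability at least 1 − 1/P, every bin receives total weight at most c₂·W/P. -/
/-!
Chernoff bound for one bin, then a union bound over the `P` bins. With `t = P ln P / W` the weight
limit gives `t w_i ≤ 1`, where `e^x ≤ 1 + 2x`; so ball `i` contributes a factor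
`(P - 1 + e^{t w_i}) / P ≤ e^{2 t w_i / P}` to the moment generating function of a bin's load, which
is therefore at most `e^{2 t W / P} = P²`. Markov's inequality at the threshold `4W/P`, where
`e^{4tW/P} = P⁴`, bounds the probability that a fixed bin overflows by `P⁻²`.
-/

open Finset Real

lemma Real.exp_le_one_add_two_mul {x : ℝ} (h0 : 0 ≤ x) (h1 : x ≤ 1) :
    exp x ≤ 1 + 2 * x := by
  have hconv := convexOn_exp.2 (Set.mem_univ 0) (Set.mem_univ 1)
    (by linarith : (0 : ℝ) ≤ 1 - x) h0 (by ring)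
  simp only [smul_eq_mul, mul_zero, mul_one, zero_add, exp_zero] at hconv
  have he : exp 1 ≤ 3 := by linarith [exp_one_lt_d9]
  nlinarith

lemma Finset.card_filter_mul_le_sum {α : Type*} (s : Finset α) (p : α → Prop) [DecidablePred p]
    {g : α → ℝ} {c : ℝ} (hg : ∀ x ∈ s, 0 ≤ g x) (hc : ∀ x ∈ s, p x → c ≤ g x) :
    #{x ∈ s | p x} * c ≤ ∑ x ∈ s, g x :=
  calc #{x ∈ s | p x} * c ≤ ∑ x ∈ s with p x, g x := by
        rw [← nsmul_eq_mul]
        exact card_nsmul_le_sum _ _ _ fun x hx => hc x (mem_filter.1 hx).1 (mem_filter.1 hx).2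
    _ ≤ ∑ x ∈ s, g x := sum_le_sum_of_subset_of_nonneg (filter_subset _ _) fun x hx _ => hg x hx

lemma Set.card_sub_mul_le_ncard_setOf_forall {α β : Type*} [Finite α] [Fintype β]
    (p : α → β → Prop) {δ : ℝ} (hδ : ∀ b, ({x | ¬p x b}.ncard : ℝ) ≤ δ) :
    (Nat.card α : ℝ) - Fintype.card β * δ ≤ {x | ∀ b, p x b}.ncard := by
  have hsplit := Set.ncard_add_ncard_compl {x | ∀ b, p x b}
  have hunion : ({x | ∀ b, p x b}ᶜ.ncard : ℝ) ≤ ∑ b, ({x | ¬p x b}.ncard : ℝ) := by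
    rw [show {x | ∀ b, p x b}ᶜ = ⋃ b, {x | ¬p x b} by ext; simp]
    exact_mod_cast Set.ncard_iUnion_le_of_fintype _
  have hsum : ∑ b, ({x | ¬p x b}.ncard : ℝ) ≤ Fintype.card β * δ := by
    simpa using Finset.sum_le_sum fun b (_ : b ∈ Finset.univ) => hδ b
  rw [← hsplit]
  push_cast
  linarith

lemma sub_one_add_exp_le_mul_exp {n x : ℝ} (hn : 0 < n) (h0 : 0 ≤ x) (h1 : x ≤ 1) :
    n - 1 + exp x ≤ n * exp (2 * x / n) :=
  calc n - 1 + exp x ≤ n * (2 * x / n + 1) := by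
        rw [mul_add, mul_div_cancel₀ _ hn.ne']
        linarith [exp_le_one_add_two_mul h0 h1]
    _ ≤ n * exp (2 * x / n) := by gcongr; exact add_one_le_exp _

lemma prod_sub_one_add_exp_le {ι : Type*} [Fintype ι] {n : ℝ} (hn : 0 < n) {x : ι → ℝ}
    (h0 : ∀ i, 0 ≤ x i) (h1 : ∀ i, x i ≤ 1) :
    ∏ i, (n - 1 + exp (x i)) ≤ n ^ Fintype.card ι * exp (2 * (∑ i, x i) / n) :=
  calc ∏ i, (n - 1 + exp (x i)) ≤ ∏ i, n * exp (2 * x i / n) :=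
        prod_le_prod (fun i _ => by linarith [one_le_exp (h0 i)]) fun i _ =>
          sub_one_add_exp_le_mul_exp hn (h0 i) (h1 i)
    _ = n ^ Fintype.card ι * exp (2 * (∑ i, x i) / n) := by
        rw [prod_mul_distrib, prod_const, card_univ, ← exp_sum, mul_sum, sum_div]

section BinLoad

variable {ι β : Type*} [Fintype ι] [DecidableEq ι] [Fintype β] [DecidableEq β]

def binLoad (w : ι → ℝ) (f : ι → β) (b : β) : ℝ := ∑ i with f i = b, w i

lemma sum_exp_mul_binLoad (w : ι → ℝ) (t : ℝ) (b : β) :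
    ∑ f : ι → β, exp (t * binLoad w f b) = ∏ i, (Fintype.card β - 1 + exp (t * w i)) := by
  have hfactor (f : ι → β) :
      exp (t * binLoad w f b) = ∏ i, exp (t * if f i = b then w i else 0) := by
    rw [← exp_sum, binLoad, sum_filter, mul_sum]
  have hball (i : ι) :
      ∑ x : β, exp (t * if x = b then w i else 0) = Fintype.card β - 1 + exp (t * w i) := by
    have hsplit (x : β) : exp (t * if x = b then w i else 0)
        = (if x = b then exp (t * w i) - 1 else 0) + 1 := by
      split_ifs <;> simp
    simp only [hsplit, sum_add_distrib, sum_ite_eq', mem_univ, if_true, sum_const, card_univ,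
      nsmul_eq_mul, mul_one]
    ring
  simp_rw [hfactor, ← hball]
  exact (Fintype.prod_sum fun i x => exp (t * if x = b then w i else 0)).symm

lemma card_lt_binLoad_mul_exp_le {w : ι → ℝ} (hw : ∀ i, 0 ≤ w i) {t : ℝ} (ht : 0 ≤ t)
    (htw : ∀ i, t * w i ≤ 1) (a : ℝ) (b : β) :
    #{f | a < binLoad w f b} * exp (t * a)
      ≤ Fintype.card β ^ Fintype.card ι * exp (2 * t * (∑ i, w i) / Fintype.card β) :=
  calc #{f | a < binLoad w f b} * exp (t * a) ≤ ∑ f : ι → β, exp (t * binLoad w f b) :=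
        card_filter_mul_le_sum _ _ (fun f _ => (exp_pos _).le) fun f _ hf => by gcongr
    _ = ∏ i, (Fintype.card β - 1 + exp (t * w i)) := sum_exp_mul_binLoad w t b
    _ ≤ Fintype.card β ^ Fintype.card ι * exp (2 * t * (∑ i, w i) / Fintype.card β) := by
        rw [mul_assoc, mul_sum]
        exact prod_sub_one_add_exp_le (Nat.cast_pos.2 (Fintype.card_pos_iff.2 ⟨b⟩))
          (fun i => mul_nonneg ht (hw i)) htw

lemma ncard_lt_binLoad_le_div_sq (hβ : 2 ≤ Fintype.card β) {w : ι → ℝ} (hw : ∀ i, 0 ≤ w i)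
    (hW : 0 < ∑ i, w i)
    (hlim : ∀ i, w i ≤ (∑ i, w i) / (Fintype.card β * log (Fintype.card β))) (b : β) :
    ({f : ι → β | 4 * (∑ i, w i) / Fintype.card β < binLoad w f b}.ncard : ℝ)
      ≤ Fintype.card β ^ Fintype.card ι / Fintype.card β ^ 2 := by
  set P : ℝ := (Fintype.card β : ℝ) with hPdef
  set W := ∑ i, w i with hWdef
  have hP : 1 < P := by rw [hPdef]; exact_mod_cast hβ
  have hlog : 0 < log P := log_pos hP
  obtain ⟨t, ht⟩ : ∃ t, t = P * log P / W := ⟨_, rfl⟩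
  have htW : t * W = P * log P := by rw [ht, div_mul_cancel₀ _ hW.ne']
  have htw (i : ι) : t * w i ≤ 1 :=
    calc t * w i ≤ t * (W / (P * log P)) := by gcongr; exacts [ht ▸ by positivity, hlim i]
      _ = 1 := by rw [mul_div_assoc', htW, div_self (by positivity)]
  have hexp (k : ℕ) (c : ℝ) (hc : c = k * log P) : exp c = P ^ k := by
    rw [hc, exp_nat_mul, exp_log (by linarith)]
  have hchernoff := card_lt_binLoad_mul_exp_le hw (ht ▸ by positivity) htw (4 * W / P) b
  rw [← hPdef, ← hWdef, hexp 4 _ (by field_simp; linear_combination 4 * htW),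
    hexp 2 _ (by field_simp; linear_combination 2 * htW)] at hchernoff
  simp_rw [Set.ncard_eq_toFinset_card', Set.toFinset_ofPred]
  rw [le_div_iff₀ (by positivity)]
  nlinarith [pow_pos (zero_lt_one.trans hP) 2]

end BinLoad

/-- **Weighted balls into bins, upper tail.**
Let `P ≥ 2` be an integer and `w 1, …, w m` nonnegative real weights with total
`W = ∑ i, w i > 0` such that `w i ≤ W / (P · ln P)` for every `i`.  Each ball `i` is placed
into one of `P` bins independently and uniformly at random (modeled by the uniform
distribution on the function space `Fin m → Fin P`).  Then there is an absolute constant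
`c₂ ≥ 1` such that with probability at least `1 - 1/P`, every bin receives total weight
at most `c₂ · W / P`. -/
theorem weighted_balls_into_bins_upper :
    ∃ c₂ : ℝ, 1 ≤ c₂ ∧
      ∀ (m P : ℕ), 2 ≤ P →
        ∀ w : Fin m → ℝ, (∀ i, 0 ≤ w i) →
          ∀ W : ℝ, W = ∑ i, w i → 0 < W →
            (∀ i, w i ≤ W / (P * Real.log P)) →
            ((Set.ncard {f : Fin m → Fin P |
                ∀ b : Fin P,
                  (∑ i ∈ Finset.univ.filter (fun i => f i = b), w i) ≤ c₂ * W / P} : ℝ)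
              / (P : ℝ) ^ m) ≥ 1 - 1 / (P : ℝ) := by
  refine ⟨4, by norm_num, fun m P hP w hw W hW hWpos hlim => ?_⟩
  subst hW
  have hbin (b : Fin P) := ncard_lt_binLoad_le_div_sq (ι := Fin m) (β := Fin P)
    (by simpa using hP) hw hWpos (by simpa using hlim) b
  simp only [Fintype.card_fin, ← not_le] at hbin
  have hgood := Set.card_sub_mul_le_ncard_setOf_forall
    (fun f b => binLoad w f b ≤ 4 * (∑ i, w i) / P) hbin
  simp only [Nat.card_eq_fintype_card, Fintype.card_fin, Fintype.card_pi, prod_const, card_univ]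
    at hgood
  rw [ge_iff_le, le_div_iff₀ (by positivity)]
  push_cast at hgood
  calc (1 - 1 / (P : ℝ)) * P ^ m = P ^ m - P * (P ^ m / P ^ 2) := by field_simp
    _ ≤ _ := hgood
end

section
/- Fix an integer C ≥ 1 and define meta-tasks inductively: a meta-task of level 0 carries exactly one task; for l ≥ 0, a meta-task of level l+1 consists of a list of k meta-tasks of level l with C+1 ≤ k ≤ 2C+1, and it carries the (disjoint) union of the tasks carried by these k children. If a collection of meta-tasks together carries n ≥ 1 tasks in total, then every meta-task in the collection has level at most log_{C+1} n; consequently, a meta-task set with chunk size C (at most C meta-tasks per level) built from n tasks contains at most C·(⌊log_{C+1} n⌋ + 1) meta-tasks. -/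
/-- A meta-task of chunk size `C` over tasks of type `α`, indexed by its level:
a meta-task of level `0` carries exactly one task; for `l ≥ 0`, a meta-task of level
`l+1` consists of a list (`Fin k`-indexed tuple) of `k` meta-tasks of level `l`
with `C+1 ≤ k ≤ 2C+1`. -/
inductive MetaTask (C : ℕ) (α : Type) : ℕ → Type
  | leaf (t : α) : MetaTask C α 0
  | node {l k : ℕ} (h₁ : C + 1 ≤ k) (h₂ : k ≤ 2 * C + 1)
      (children : Fin k → MetaTask C α l) : MetaTask C α (l + 1)

/-- The multiset of tasks carried by a meta-task: a level-`0` meta-task carries its single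
task, and a meta-task of level `l+1` carries the disjoint (multiset) union of the tasks
carried by its children. -/
def MetaTask.tasks {C : ℕ} {α : Type} : {l : ℕ} → MetaTask C α l → Multiset α
  | _, .leaf t => {t}
  | _, .node _ _ children => ∑ i, (children i).tasks

/-! Each node has at least `C + 1` children, so a level-`l` meta-task carries at least
`(C + 1) ^ l` tasks; hence no level exceeds `log_{C+1} n`, and a set with at most `C`
meta-tasks on each of the levels `0, …, ⌊log_{C+1} n⌋` has at most `C · (⌊log_{C+1} n⌋ + 1)`. -/

namespace MetaTask

variable {C : ℕ} {α : Type}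

theorem pow_le_card_tasks : ∀ {l : ℕ} (mt : MetaTask C α l), (C + 1) ^ l ≤ Multiset.card mt.tasks
  | _, .leaf _ => by simp [tasks]
  | _, .node (l := l) (k := k) hk _ children =>
    calc (C + 1) ^ (l + 1) = (C + 1) * (C + 1) ^ l := by ring
      _ ≤ k * (C + 1) ^ l := Nat.mul_le_mul_right _ hk
      _ = ∑ _i : Fin k, (C + 1) ^ l := by simp
      _ ≤ ∑ i, Multiset.card (children i).tasks :=
        Finset.sum_le_sum fun i _ => (children i).pow_le_card_tasks
      _ = Multiset.card (∑ i, (children i).tasks) := by simp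

theorem level_le_logb_of_card_tasks_le (hC : 1 ≤ C) {l : ℕ} (mt : MetaTask C α l) {n : ℕ}
    (hcard : Multiset.card mt.tasks ≤ n) : (l : ℝ) ≤ Real.logb (C + 1) n := by
  have hpow : ((C : ℝ) + 1) ^ l ≤ n := by exact_mod_cast mt.pow_le_card_tasks.trans hcard
  have hn_pos : (0 : ℝ) < n := (pow_pos (by positivity) l).trans_le hpow
  rw [Real.le_logb_iff_rpow_le (by norm_cast; omega) hn_pos, Real.rpow_natCast]
  exact hpow

end MetaTask

theorem List.length_le_mul_of_length_filter_le {β : Type} (f : β → ℕ) (s : List β) {L C : ℕ}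
    (hs : ∀ p ∈ s, f p ≤ L) (hfib : ∀ l, (s.filter (fun p => f p = l)).length ≤ C) :
    s.length ≤ C * (L + 1) :=
  calc s.length = ∑ l ∈ Finset.range (L + 1), Multiset.count l (s.map f : Multiset ℕ) := by
        rw [Multiset.sum_count_eq_card (by simpa using hs)]; simp
    _ = ∑ l ∈ Finset.range (L + 1), (s.filter (fun p => f p = l)).length := by
        simp only [Multiset.coe_count, List.count_eq_length_filter, List.filter_map,
          List.length_map, Function.comp_def]
        -- `f p == l` is `Nat.beq`, which is definitionally `decide (f p = l)`
        rfl
    _ ≤ ∑ _l ∈ Finset.range (L + 1), C := Finset.sum_le_sum fun l _ => hfib l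
    _ = C * (L + 1) := by simp [mul_comm]

theorem metaTask_level_and_count_bounds_general {α : Type} {C : ℕ} (hC : 1 ≤ C)
    (mts : List ((l : ℕ) × MetaTask C α l)) (n : ℕ)
    (hn : (n : ℕ) = Multiset.card (mts.map (fun p => p.2.tasks)).sum) :
    (∀ p ∈ mts, (p.1 : ℝ) ≤ Real.log n / Real.log (C + 1)) ∧
    ((∀ l : ℕ, (mts.filter (fun p => p.1 = l)).length ≤ C) →
      mts.length ≤ C * (⌊Real.log n / Real.log (C + 1)⌋₊ + 1)) := by
  have hlevel : ∀ p ∈ mts, (p.1 : ℝ) ≤ Real.log n / Real.log (C + 1) := fun p hp =>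
    p.2.level_le_logb_of_card_tasks_le hC <|
      hn ▸ Multiset.card_le_card (List.le_sum_of_mem (List.mem_map_of_mem hp))
  exact ⟨hlevel, List.length_le_mul_of_length_filter_le _ mts fun p hp => Nat.le_floor (hlevel p hp)⟩

/-- **Meta-task level and count bounds.** Fix an integer `C ≥ 1`.  If a collection `mts` of
meta-tasks (a list of meta-tasks of arbitrary levels) together carries `n ≥ 1` tasks in
total, then every meta-task in the collection has level at most `log_{C+1} n`; consequently,
if the collection is a meta-task set of chunk size `C` (at most `C` meta-tasks per level),
then it contains at most `C·(⌊log_{C+1} n⌋ + 1)` meta-tasks. -/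
theorem metaTask_level_and_count_bounds {α : Type} {C : ℕ} (hC : 1 ≤ C)
    (mts : List ((l : ℕ) × MetaTask C α l)) (n : ℕ)
    (hn : (n : ℕ) = Multiset.card (mts.map (fun p => p.2.tasks)).sum)
    (hn1 : 1 ≤ n) :
    (∀ p ∈ mts, (p.1 : ℝ) ≤ Real.log n / Real.log (C + 1)) ∧
    ((∀ l : ℕ, (mts.filter (fun p => p.1 = l)).length ≤ C) →
      mts.length ≤ C * (⌊Real.log n / Real.log (C + 1)⌋₊ + 1)) :=
  metaTask_level_and_count_bounds_general hC mts n hn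
end

section
/- Fix an integer C ≥ 1. The merge of two meta-task sets with chunk size C proceeds level by level from the lowest level upward: at each level l, the meta-tasks of level l from both sets (together with at most one carry meta-task produced from level l−1) are combined; if their number exceeds C, all of them are removed and replaced by a single new meta-task of level l+1 whose children they are. Then: (i) the result is again a meta-task set with at most C meta-tasks per level; (ii) if the two input sets have maximum levels L₁ and L₂, the result has maximum level at most max(L₁, L₂) + 1; and (iii) the multiset of tasks carried by the result equals the disjoint union of the multisets of tasks carried by the two inputs. -/
/-- A meta-task set with chunk size `C`: for each level `l` it holds a list of meta-tasks
of level `l`, with at most `C` meta-tasks per level. -/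
structure MetaTaskSet (C : ℕ) (α : Type) where
  items : (l : ℕ) → List (MetaTask C α l)
  bounded : ∀ l, (items l).length ≤ C

/-- One step of the merge at level `l`: the level-`l` meta-tasks of both sets, together
with the (at most one) carry meta-task produced from level `l-1`, are combined; if their
number exceeds `C`, all of them are removed and replaced by a single new meta-task of level
`l+1` whose children they are (which is carried to the next level). -/
def mergeStep {C : ℕ} {α : Type} {l : ℕ}
    (xs ys : List (MetaTask C α l)) (hx : xs.length ≤ C) (hy : ys.length ≤ C)
    (carry : Option (MetaTask C α l)) :
    List (MetaTask C α l) × Option (MetaTask C α (l + 1)) :=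
  if h : C < (xs ++ ys ++ carry.toList).length then
    ([], some (MetaTask.node (k := (xs ++ ys ++ carry.toList).length)
      (by omega)
      (by
        have hc : carry.toList.length ≤ 1 := by cases carry <;> simp
        simp only [List.length_append]
        try simp only [List.length_append] at hc ⊢
        omega)
      (xs ++ ys ++ carry.toList).get))
  else (xs ++ ys ++ carry.toList, none)

/-- The carry meta-task entering level `l` of the merge (produced at level `l-1`);
the merge proceeds level by level from the lowest level upward. -/
def mergeCarry {C : ℕ} {α : Type} (S₁ S₂ : MetaTaskSet C α) :
    (l : ℕ) → Option (MetaTask C α l)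
  | 0 => none
  | l + 1 =>
    (mergeStep (S₁.items l) (S₂.items l) (S₁.bounded l) (S₂.bounded l)
      (mergeCarry S₁ S₂ l)).2

/-- The merge of two meta-task sets with chunk size `C`, proceeding level by level from the
lowest level upward with at most one carry between consecutive levels. -/
def MetaTaskSet.merge {C : ℕ} {α : Type} (S₁ S₂ : MetaTaskSet C α) : MetaTaskSet C α where
  items l := (mergeStep (S₁.items l) (S₂.items l) (S₁.bounded l) (S₂.bounded l)
      (mergeCarry S₁ S₂ l)).1
  bounded l := by
    dsimp only [mergeStep]
    split
    · simp
    · next h => simp only [List.length_append] at h ⊢; omega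

/-- The multiset of all tasks carried by the meta-tasks of levels `< N` of a meta-task
set. -/
def MetaTaskSet.tasksUpTo {C : ℕ} {α : Type} (S : MetaTaskSet C α) (N : ℕ) : Multiset α :=
  ∑ l ∈ Finset.range N, ((S.items l).map MetaTask.tasks).sum

/-
The merge works like binary addition with carries. At each level, the tasks of the output items
plus those of the outgoing carry equal the tasks of the two input levels plus those of the
incoming carry, so by induction the tasks below level `N` of the merge, together with the carry
into level `N`, are those of both inputs below `N`. Above both maximum levels the inputs are
empty; since `C ≥ 1`, a lone carry then stays put as an output item, so from level
`max L₁ L₂ + 2` on the carry is `none` and the output is empty.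
-/

section

variable {C : ℕ} {α : Type}

theorem MetaTask.tasks_node_get {l : ℕ} (L : List (MetaTask C α l))
    (h₁ : C + 1 ≤ L.length) (h₂ : L.length ≤ 2 * C + 1) :
    (MetaTask.node h₁ h₂ L.get).tasks = (L.map MetaTask.tasks).sum := by
  simp [MetaTask.tasks]

theorem mergeStep_tasks {l : ℕ} (xs ys : List (MetaTask C α l)) (hx : xs.length ≤ C)
    (hy : ys.length ≤ C) (carry : Option (MetaTask C α l)) :
    ((mergeStep xs ys hx hy carry).1.map MetaTask.tasks).sum
        + ((mergeStep xs ys hx hy carry).2.toList.map MetaTask.tasks).sum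
      = ((xs ++ ys ++ carry.toList).map MetaTask.tasks).sum := by
  unfold mergeStep
  split
  · simp [MetaTask.tasks_node_get]
  · simp

theorem mergeStep_nil_nil_fst {l : ℕ} (hx : ([] : List (MetaTask C α l)).length ≤ C)
    (hy : ([] : List (MetaTask C α l)).length ≤ C) :
    (mergeStep [] [] hx hy none).1 = [] := by
  unfold mergeStep
  split <;> rfl

theorem mergeStep_nil_nil_snd (hC : 1 ≤ C) {l : ℕ}
    (hx : ([] : List (MetaTask C α l)).length ≤ C) (hy : ([] : List (MetaTask C α l)).length ≤ C)
    (carry : Option (MetaTask C α l)) :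
    (mergeStep [] [] hx hy carry).2 = none := by
  have hcarry : carry.toList.length ≤ 1 := by cases carry <;> simp
  unfold mergeStep
  rw [dif_neg (by simp only [List.nil_append]; omega)]

theorem MetaTaskSet.tasksUpTo_succ (S : MetaTaskSet C α) (N : ℕ) :
    S.tasksUpTo (N + 1) = S.tasksUpTo N + ((S.items N).map MetaTask.tasks).sum :=
  Finset.sum_range_succ _ N

theorem MetaTaskSet.merge_items (S₁ S₂ : MetaTaskSet C α) (l : ℕ) :
    (S₁.merge S₂).items l
      = (mergeStep (S₁.items l) (S₂.items l) (S₁.bounded l) (S₂.bounded l)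
          (mergeCarry S₁ S₂ l)).1 :=
  rfl

theorem tasksUpTo_merge_add_mergeCarry (S₁ S₂ : MetaTaskSet C α) (N : ℕ) :
    (S₁.merge S₂).tasksUpTo N + ((mergeCarry S₁ S₂ N).toList.map MetaTask.tasks).sum
      = S₁.tasksUpTo N + S₂.tasksUpTo N := by
  induction N with
  | zero => simp [MetaTaskSet.tasksUpTo, mergeCarry]
  | succ n ih =>
    have hstep := mergeStep_tasks (S₁.items n) (S₂.items n) (S₁.bounded n) (S₂.bounded n)
      (mergeCarry S₁ S₂ n)
    simp only [List.map_append, List.sum_append] at hstep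
    simp only [MetaTaskSet.tasksUpTo_succ, mergeCarry, MetaTaskSet.merge_items]
    rw [add_assoc, hstep, add_add_add_comm, ← ih]
    abel

variable {S₁ S₂ : MetaTaskSet C α} {L₁ L₂ : ℕ}

theorem mergeCarry_eq_none (hC : 1 ≤ C) (hL₁ : ∀ l, L₁ < l → S₁.items l = [])
    (hL₂ : ∀ l, L₂ < l → S₂.items l = []) {l : ℕ} (hl : max L₁ L₂ + 2 ≤ l) :
    mergeCarry S₁ S₂ l = none := by
  obtain ⟨n, rfl⟩ : ∃ n, l = n + 1 := ⟨l - 1, by omega⟩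
  rw [mergeCarry]
  simp only [hL₁ n (by omega), hL₂ n (by omega)]
  exact mergeStep_nil_nil_snd hC _ _ _

end

/-- **Correctness of merging meta-task sets.** Fix an integer `C ≥ 1` and two meta-task sets
`S₁, S₂` with chunk size `C` whose maximum levels are (at most) `L₁` and `L₂`.  Then:
(i) the merge is again a meta-task set with at most `C` meta-tasks per level;
(ii) the merge has maximum level at most `max L₁ L₂ + 1`, i.e. it has no meta-tasks at any
level above `max L₁ L₂ + 1`; and
(iii) the multiset of tasks carried by the merge equals the disjoint (multiset) union of the
multisets of tasks carried by the two inputs (all tasks live at levels below any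
`N ≥ max L₁ L₂ + 2`). -/
theorem metaTaskSet_merge_spec {α : Type} {C : ℕ} (hC : 1 ≤ C)
    (S₁ S₂ : MetaTaskSet C α) (L₁ L₂ : ℕ)
    (hL₁ : ∀ l, L₁ < l → S₁.items l = [])
    (hL₂ : ∀ l, L₂ < l → S₂.items l = []) :
    (∀ l, ((S₁.merge S₂).items l).length ≤ C) ∧
    (∀ l, max L₁ L₂ + 1 < l → (S₁.merge S₂).items l = []) ∧
    (∀ N, max L₁ L₂ + 2 ≤ N →
      (S₁.merge S₂).tasksUpTo N = S₁.tasksUpTo N + S₂.tasksUpTo N) := by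
  refine ⟨(S₁.merge S₂).bounded, fun l hl => ?_, fun N hN => ?_⟩
  · rw [MetaTaskSet.merge_items]
    simp only [hL₁ l (by omega), hL₂ l (by omega), mergeCarry_eq_none hC hL₁ hL₂ hl]
    exact mergeStep_nil_nil_fst _ _
  · simpa [mergeCarry_eq_none hC hL₁ hL₂ hN] using tasksUpTo_merge_add_mergeCarry S₁ S₂ N
end
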